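/- arXiv:1210.5488 — 4 statements merged into one kernel-verified Lean document; each statement's English description precedes it below -/
import Mathlib

section
/- For any sequences f = (f_1,…,f_N) and g = (g_1,…,g_N) in H^N, the mixed frame potential equals the sum of the squares of the eigenvalues of the mixed frame operator counted with algebraic multiplicity: FP(f,g) = ∑_{n=1}^d λ_n², where λ_1,…,λ_d is the multiset of roots of the characteristic polynomial of TU*. -/
/-! Both sides equal `tr ((TU*)²)`. Since `TU*` is the sum of the rank-one maps
`x ↦ ⟨x, g m⟩ f m`, we get `tr (S ∘ TU*) = ∑ m, ⟨S f m, g m⟩`, which for `S = TU*` is the frame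
potential. On the other side, the eigenvalues of `A²` are the squares of those of `A`, with
multiplicity: substituting `X²` into the characteristic polynomial of `A²` gives
`det (X - A) * det (X + A) = ∏ (X - λ) (X + λ) = ∏ (X² - λ²)`, and substituting `X²` is
injective. -/

open scoped ComplexInnerProductSpace

/- `H` is a complex inner product space of finite dimension `d = Module.finrank ℂ H`.
The paper's inner product `⟨x, y⟩` is linear in the first argument, hence it corresponds to
Mathlib's `⟪y, x⟫ = inner y x` (Mathlib's inner product is linear in the second argument). -/
variable {H : Type*} [NormedAddCommGroup H] [InnerProductSpace ℂ H] [FiniteDimensional ℂ H]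

/-- The mixed frame operator `TU⋆ : x ↦ ∑ m, ⟨x, g m⟩ f m` (paper convention),
i.e. `x ↦ ∑ m, ⟪g m, x⟫ • f m` in Mathlib's convention. Note that `UT⋆` for the pair
`(f, g)` is then `mixedOp g f`. -/
noncomputable def mixedOp {N : ℕ} (f g : Fin N → H) : H →ₗ[ℂ] H where
  toFun x := ∑ m, (⟪g m, x⟫) • f m
  map_add' x y := by
    simp [inner_add_right, add_smul, Finset.sum_add_distrib]
  map_smul' c x := by
    simp [inner_smul_right, mul_smul, Finset.smul_sum]

/-- The mixed frame potential `FP(f,g) = ∑ m, ∑ n, ⟨f m, g n⟩ * ⟨f n, g m⟩`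
(paper convention: inner product linear in the first argument). -/
noncomputable def mixedFP {N : ℕ} (f g : Fin N → H) : ℂ :=
  ∑ m, ∑ n, ⟪g n, f m⟫ * ⟪g m, f n⟫

open Polynomial

namespace Matrix
variable {n R : Type*} [Fintype n] [DecidableEq n] [CommRing R]

theorem expand_charpoly_mul_self (A : Matrix n n R) :
    expand R 2 (A * A).charpoly = A.charpoly * (-A).charpoly := by
  have hX : Commute (scalar n (X : R[X])) (C.mapMatrix A) :=
    scalar_commute _ (fun _ => Commute.all _ _) _
  have hmap : (expand R 2).mapMatrix (charmatrix (A * A)) = charmatrix A * charmatrix (-A) := by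
    simp only [charmatrix, map_sub, map_neg, map_mul, sub_neg_eq_add,
      ← hX.mul_self_sub_mul_self_eq']
    ext i j : 1
    simp [Function.comp_def, sq]
  rw [charpoly, AlgHom.map_det, hmap, det_mul, charpoly, charpoly]

theorem charpoly_neg (A : Matrix n n R) :
    (-A).charpoly = C ((-1) ^ Fintype.card n) * A.charpoly.comp (-X) := by
  have hmap : (aeval (-X : R[X])).mapMatrix (charmatrix A) = -charmatrix (-A) := by
    ext i j : 1
    by_cases h : i = j <;> simp [charmatrix, h, scalar_apply]
    ring
  rw [comp_eq_aeval, charpoly, charpoly, AlgHom.map_det, hmap, det_neg, ← mul_assoc]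
  simp [← pow_add, ← two_mul, pow_mul]

theorem splits_charpoly_neg {A : Matrix n n R} (hA : A.charpoly.Splits) :
    (-A).charpoly.Splits := by
  rw [charpoly_neg]
  exact hA.comp_neg_X.C_mul _

theorem roots_charpoly_neg [IsDomain R] (A : Matrix n n R) :
    (-A).charpoly.roots = A.charpoly.roots.map Neg.neg := by
  rw [charpoly_neg, roots_C_mul _ (pow_ne_zero _ (neg_ne_zero.mpr one_ne_zero)), roots_comp_neg_X]

theorem charpoly_mul_self_eq_prod [IsDomain R] {A : Matrix n n R} (hA : A.charpoly.Splits) :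
    (A * A).charpoly = ((A.charpoly.roots.map (· ^ 2)).map fun z => X - C z).prod := by
  apply expand_injective two_pos
  rw [Multiset.map_map, expand_charpoly_mul_self, hA.eq_prod_roots_of_monic A.charpoly_monic,
    (splits_charpoly_neg hA).eq_prod_roots_of_monic (-A).charpoly_monic, roots_charpoly_neg,
    roots_multiset_prod_X_sub_C, Multiset.map_map, map_multiset_prod, Multiset.map_map,
    ← Multiset.prod_map_mul]
  refine congrArg Multiset.prod (Multiset.map_congr rfl fun z _ => ?_)
  simp only [Function.comp_apply, map_sub, map_pow, expand_X, expand_C, map_neg]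
  ring

end Matrix

theorem Module.End.trace_mul_self_eq_sum_sq_roots_charpoly_of_splits {K V : Type*} [Field K]
    [AddCommGroup V] [Module K V] [FiniteDimensional K V] {T : Module.End K V}
    (hT : T.charpoly.Splits) :
    LinearMap.trace K V (T * T) = (T.charpoly.roots.map (· ^ 2)).sum := by
  let b := Module.Free.chooseBasis K V
  have hsq : (T * T).charpoly = ((T.charpoly.roots.map (· ^ 2)).map fun z => X - C z).prod := by
    rw [← LinearMap.charpoly_toMatrix (T * T) b, LinearMap.toMatrix_mul,
      ← LinearMap.charpoly_toMatrix T b]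
    exact Matrix.charpoly_mul_self_eq_prod (by rwa [LinearMap.charpoly_toMatrix])
  have hsplits : (T * T).charpoly.Splits :=
    hsq ▸ Splits.multisetProd (Multiset.forall_mem_map_iff.mpr fun z _ => Splits.X_sub_C z)
  rw [trace_eq_sum_roots_charpoly_of_splits hsplits, hsq, roots_multiset_prod_X_sub_C]

omit [FiniteDimensional ℂ H] in
theorem comp_mixedOp {N : ℕ} (S : Module.End ℂ H) (f g : Fin N → H) :
    S ∘ₗ mixedOp f g = mixedOp (fun m => S (f m)) g := by
  ext x
  simp [mixedOp]

theorem trace_mixedOp {N : ℕ} (f g : Fin N → H) :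
    LinearMap.trace ℂ H (mixedOp f g) = ∑ m, ⟪g m, f m⟫ := by
  have hrankOne : mixedOp f g = ∑ m, (innerₛₗ ℂ (g m)).smulRight (f m) := by
    ext x
    simp [mixedOp]
  simp [hrankOne, LinearMap.trace_smulRight]

theorem trace_mixedOp_mul_self {N : ℕ} (f g : Fin N → H) :
    LinearMap.trace ℂ H (mixedOp f g * mixedOp f g) = mixedFP f g := by
  rw [Module.End.mul_eq_comp, comp_mixedOp, trace_mixedOp]
  simp [mixedOp, mixedFP]

theorem mixedFP_eq_sum_sq_eigenvalues_general {N : ℕ} (f g : Fin N → H) :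
    mixedFP f g = ((LinearMap.charpoly (mixedOp f g)).roots.map (fun z => z ^ 2)).sum := by
  rw [← trace_mixedOp_mul_self,
    Module.End.trace_mul_self_eq_sum_sq_roots_charpoly_of_splits (IsAlgClosed.splits _)]

/-- the mixed frame potential equals the sum of the squares of the eigenvalues
of the mixed frame operator counted with algebraic multiplicity (the multiset of roots of
the characteristic polynomial of `TU⋆`). -/
theorem mixedFP_eq_sum_sq_eigenvalues {N : ℕ} (hd : 1 ≤ Module.finrank ℂ H)
    (f g : Fin N → H) :
    mixedFP f g = ((LinearMap.charpoly (mixedOp f g)).roots.map (fun z => z ^ 2)).sum :=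
  mixedFP_eq_sum_sq_eigenvalues_general f g
end

section
/- Let α = (α_1,…,α_N) ∈ ℂ^N. If (f,g) ∈ S̃(α) is a local extremum (local minimum or local maximum) on the set S̃(α) of the real part of the mixed frame potential FP, or a local extremum on S̃(α) of the imaginary part of FP, then for each m ∈ {1,…,N} there exists c ∈ ℂ such that ∑_{n≠m} ⟨f_m, g_n⟩ f_n = c·f_m and ∑_{n≠m} ⟨g_m, f_n⟩ g_n = conj(c)·g_m. -/
open scoped ComplexInnerProductSpace

/- `H` is a complex inner product space of finite dimension `d = Module.finrank ℂ H`.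
The paper's inner product `⟨x, y⟩` is linear in the first argument, hence it corresponds to
Mathlib's `⟪y, x⟫ = inner y x` (Mathlib's inner product is linear in the second argument). -/
variable {H : Type*} [NormedAddCommGroup H] [InnerProductSpace ℂ H] [FiniteDimensional ℂ H]

/-!
Write `A = ∑_{n ≠ m} ⟪g n, f m⟫ • f n` and `B = ∑_{n ≠ m} ⟪f n, g m⟫ • g n`. If
`⟪g m, v⟫ + ⟪w, f m⟫ = 0` and `⟪w, v⟫ = 0`, the line `(f m + t v, g m + t w)`, `t ∈ ℝ`, replacing
the `m`-th pair stays in `S̃(α)`, and along it `FP` is a quadratic polynomial in `t` with linear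
coefficient `2 (⟪B, v⟫ + ⟪w, A⟫)`. At an extremum of `Re FP` (resp. `Im FP`) the real (resp.
imaginary) part of this coefficient vanishes; the admissible direction `(i v, -i w)` multiplies it
by `i`, so it vanishes altogether. Taking `w = 0` or `v = 0` gives `B = c₂ • g m` and
`A = c₁ • f m`. Since `⟪g m, A⟫ = ⟪B, f m⟫`, we get `c₁ = conj c₂` when `⟪g m, f m⟫ ≠ 0`; otherwise
the admissible direction `(‖f m‖² g m, -‖g m‖² f m)` gives it (if `f m` and `g m` are nonzero;
otherwise there is nothing to prove).
-/

open Finset Function Filter Topology ComplexConjugate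
open scoped InnerProductSpace

theorem Fintype.sum_sum_eq_add_sum_erase {ι M : Type*} [Fintype ι] [DecidableEq ι]
    [AddCommMonoid M] (a : ι) (T : ι → ι → M) :
    ∑ i, ∑ j, T i j = T a a + ∑ j ∈ univ.erase a, (T a j + T j a)
      + ∑ i ∈ univ.erase a, ∑ j ∈ univ.erase a, T i j := by
  have split : ∀ i, ∑ j, T i j = T i a + ∑ j ∈ univ.erase a, T i j := fun i =>
    (add_sum_erase _ _ (mem_univ a)).symm
  rw [← add_sum_erase _ _ (mem_univ a)]
  simp only [split, sum_add_distrib]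
  abel

section InnerProduct

variable {𝕜 E : Type*} [RCLike 𝕜] [NormedAddCommGroup E] [InnerProductSpace 𝕜 E]

theorem inner_add_smul_add_smul_of_tangent {x y v w : E} (h₁ : ⟪y, v⟫_𝕜 + ⟪w, x⟫_𝕜 = 0)
    (h₂ : ⟪w, v⟫_𝕜 = 0) {t : 𝕜} (ht : conj t = t) : ⟪y + t • w, x + t • v⟫_𝕜 = ⟪y, x⟫_𝕜 := by
  simp only [inner_add_left, inner_add_right, inner_smul_left, inner_smul_right, ht]
  linear_combination t * h₁ + t ^ 2 * h₂

theorem exists_eq_smul_of_forall_inner_eq_zero {x y : E}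
    (h : ∀ u, ⟪y, u⟫_𝕜 = 0 → ⟪u, x⟫_𝕜 = 0) : ∃ c : 𝕜, x = c • y := by
  have hx : x ∈ (𝕜 ∙ y)ᗮᗮ := Submodule.mem_orthogonal _ _ |>.2 fun u hu =>
    h u (Submodule.mem_orthogonal_singleton_iff_inner_right.1 hu)
  rw [Submodule.orthogonal_orthogonal, Submodule.mem_span_singleton] at hx
  obtain ⟨c, hc⟩ := hx
  exact ⟨c, hc.symm⟩

theorem exists_eq_smul_and_eq_conj_smul_of_forall_inner {x y A B : E}
    (hAB : ⟪y, A⟫_𝕜 = ⟪B, x⟫_𝕜)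
    (h : ∀ v w, ⟪y, v⟫_𝕜 + ⟪w, x⟫_𝕜 = 0 → ⟪w, v⟫_𝕜 = 0 → ⟪B, v⟫_𝕜 + ⟪w, A⟫_𝕜 = 0) :
    ∃ c : 𝕜, A = c • x ∧ B = conj c • y := by
  obtain ⟨a, rfl⟩ : ∃ a : 𝕜, A = a • x := exists_eq_smul_of_forall_inner_eq_zero fun u hu => by
    simpa using h 0 u (by simp [inner_eq_zero_symm.1 hu]) (by simp)
  obtain ⟨b, rfl⟩ : ∃ b : 𝕜, B = b • y := exists_eq_smul_of_forall_inner_eq_zero fun u hu =>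
    inner_eq_zero_symm.1 (by simpa using h u 0 (by simp [hu]) (by simp))
  rcases eq_or_ne x 0 with rfl | hx
  · exact ⟨conj b, by simp, by simp⟩
  rcases eq_or_ne y 0 with rfl | hy
  · exact ⟨a, rfl, by simp⟩
  suffices a = conj b from ⟨a, rfl, by rw [this, RCLike.conj_conj]⟩
  by_cases hyx : ⟪y, x⟫_𝕜 = 0
  · have hxy : (‖x‖ : 𝕜) ^ 2 * (‖y‖ : 𝕜) ^ 2 ≠ 0 := by simp [hx, hy]
    have key := h ((‖x‖ : 𝕜) ^ 2 • y) (-(‖y‖ : 𝕜) ^ 2 • x)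
      (by simp only [inner_smul_left, inner_smul_right, neg_smul, inner_neg_left,
        inner_self_eq_norm_sq_to_K, map_pow, RCLike.conj_ofReal]; ring)
      (by simp [inner_smul_left, inner_smul_right, inner_eq_zero_symm.1 hyx])
    simp only [inner_smul_left, inner_smul_right, neg_smul, inner_neg_left,
      inner_self_eq_norm_sq_to_K, map_pow, RCLike.conj_ofReal] at key
    exact mul_left_cancel₀ hxy (by linear_combination -key)
  · simp only [inner_smul_left, inner_smul_right] at hAB
    exact mul_right_cancel₀ hyx (by rw [hAB])

end InnerProduct

theorem IsLocalExtr.linear_coeff_eq_zero {a b c : ℝ}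
    (h : IsLocalExtr (fun t : ℝ => a + t * b + t ^ 2 * c) 0) : b = 0 := by
  have hlin : HasDerivAt (fun t : ℝ => a + t * b) b 0 := by
    simpa using ((hasDerivAt_id (0 : ℝ)).mul_const b).const_add a
  have hsq : HasDerivAt (fun t : ℝ => t ^ 2 * c) 0 0 := by
    simpa using (hasDerivAt_pow 2 (0 : ℝ)).mul_const c
  have hderiv := hlin.add hsq
  rw [add_zero] at hderiv
  exact h.hasDerivAt_eq_zero hderiv

section MixedFramePotential

variable {E : Type*} [NormedAddCommGroup E] [InnerProductSpace ℂ E] {N : ℕ}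

noncomputable def mixedOpErase (f g : Fin N → E) (m : Fin N) : E →ₗ[ℂ] E where
  toFun x := ∑ n ∈ univ.erase m, ⟪g n, x⟫ • f n
  map_add' x y := by simp only [inner_add_right, add_smul, sum_add_distrib]
  map_smul' c x := by simp only [inner_smul_right, mul_smul, smul_sum, RingHom.id_apply]

theorem mixedOpErase_apply (f g : Fin N → E) (m : Fin N) (x : E) :
    mixedOpErase f g m x = ∑ n ∈ univ.erase m, ⟪g n, x⟫ • f n := rfl

theorem inner_mixedOpErase_swap (f g : Fin N → E) (m : Fin N) (x y : E) :
    ⟪mixedOpErase g f m y, x⟫ = ⟪y, mixedOpErase f g m x⟫ := by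
  simp only [mixedOpErase_apply, sum_inner, inner_sum, inner_smul_left, inner_smul_right,
    inner_conj_symm, mul_comm]

theorem exists_mixedFP_update_eq (f g : Fin N → E) (m : Fin N) :
    ∃ R : ℂ, ∀ x y : E, mixedFP (update f m x) (update g m y)
      = ⟪y, x⟫ ^ 2 + 2 * ⟪y, mixedOpErase f g m x⟫ + R := by
  refine ⟨∑ i ∈ univ.erase m, ∑ j ∈ univ.erase m, ⟪g j, f i⟫ * ⟪g i, f j⟫, fun x y => ?_⟩
  have hcross : ∀ j ∈ univ.erase m, ⟪update g m y j, update f m x m⟫ * ⟪update g m y m,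
      update f m x j⟫ + ⟪update g m y m, update f m x j⟫ * ⟪update g m y j, update f m x m⟫
      = 2 * ⟪y, ⟪g j, x⟫ • f j⟫ := fun j hj => by
    rw [update_of_ne (ne_of_mem_erase hj), update_of_ne (ne_of_mem_erase hj), update_self,
      update_self, inner_smul_right]
    ring
  have hrest : ∀ i ∈ univ.erase m, ∀ j ∈ univ.erase m,
      ⟪update g m y j, update f m x i⟫ * ⟪update g m y i, update f m x j⟫
        = ⟪g j, f i⟫ * ⟪g i, f j⟫ := fun i hi j hj => by
    simp only [update_of_ne (ne_of_mem_erase hi), update_of_ne (ne_of_mem_erase hj)]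
  rw [mixedFP, Fintype.sum_sum_eq_add_sum_erase m, sum_congr rfl hcross,
    sum_congr rfl fun i hi => sum_congr rfl (hrest i hi), ← mul_sum, ← inner_sum,
    ← mixedOpErase_apply, update_self, update_self, sq]

theorem exists_mixedFP_update_add_smul_eq (f g : Fin N → E) (m : Fin N) {v w : E}
    (h₁ : ⟪g m, v⟫ + ⟪w, f m⟫ = 0) (h₂ : ⟪w, v⟫ = 0) :
    ∃ K : ℂ, ∀ t : ℝ,
      mixedFP (update f m (f m + (t : ℂ) • v)) (update g m (g m + (t : ℂ) • w))
        = K + t • (2 * (⟪g m, mixedOpErase f g m v⟫ + ⟪w, mixedOpErase f g m (f m)⟫))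
          + t ^ 2 • (2 * ⟪w, mixedOpErase f g m v⟫) := by
  obtain ⟨R, hR⟩ := exists_mixedFP_update_eq f g m
  refine ⟨⟪g m, f m⟫ ^ 2 + 2 * ⟪g m, mixedOpErase f g m (f m)⟫ + R, fun t => ?_⟩
  rw [hR, inner_add_smul_add_smul_of_tangent h₁ h₂ (Complex.conj_ofReal t)]
  simp only [map_add, map_smul, inner_add_left, inner_add_right, inner_smul_left,
    inner_smul_right, Complex.conj_ofReal, Complex.real_smul]
  push_cast
  ring

theorem map_inner_mixedOpErase_eq_zero_of_isLocalExtrOn (ρ : ℂ →ₗ[ℝ] ℝ) {α : Fin N → ℂ}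
    {f g : Fin N → E} (hS : ∀ i, ⟪g i, f i⟫ = α i)
    (hext : IsLocalExtrOn (fun p : (Fin N → E) × (Fin N → E) => ρ (mixedFP p.1 p.2))
      {p | ∀ i, ⟪p.2 i, p.1 i⟫ = α i} (f, g))
    (m : Fin N) {v w : E} (h₁ : ⟪g m, v⟫ + ⟪w, f m⟫ = 0) (h₂ : ⟪w, v⟫ = 0) :
    ρ (⟪g m, mixedOpErase f g m v⟫ + ⟪w, mixedOpErase f g m (f m)⟫) = 0 := by
  set S : Set ((Fin N → E) × (Fin N → E)) := {p | ∀ i, ⟪p.2 i, p.1 i⟫ = α i}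
  let p : ℝ → (Fin N → E) × (Fin N → E) := fun t =>
    (update f m (f m + (t : ℂ) • v), update g m (g m + (t : ℂ) • w))
  have hp0 : p 0 = (f, g) := by simp [p]
  have hpS : ∀ t, p t ∈ S := fun t i => by
    rcases eq_or_ne i m with rfl | hi
    · simp only [p, update_self]
      rw [inner_add_smul_add_smul_of_tangent h₁ h₂ (Complex.conj_ofReal t), hS]
    · simp [p, update_of_ne hi, hS]
  have hp : Continuous p := by
    refine .prodMk ?_ ?_ <;>
      exact continuous_const.update m (continuous_const.add
        (Complex.continuous_ofReal.smul continuous_const))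
  have htendsto : Tendsto p (𝓝 0) (𝓝[S] (f, g)) :=
    tendsto_nhdsWithin_iff.2 ⟨hp0 ▸ hp.tendsto 0, .of_forall hpS⟩
  have hextr : IsExtrFilter (fun p : (Fin N → E) × (Fin N → E) => ρ (mixedFP p.1 p.2))
      (𝓝[S] (f, g)) (p 0) := hp0 ▸ hext
  have hline : IsLocalExtr (fun t : ℝ => ρ (mixedFP (p t).1 (p t).2)) 0 :=
    hextr.comp_tendsto htendsto
  obtain ⟨K, hK⟩ := exists_mixedFP_update_add_smul_eq f g m h₁ h₂
  simp only [p, hK, map_add, map_smul, smul_eq_mul] at hline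
  have h2 := hline.linear_coeff_eq_zero
  rw [two_mul, map_add] at h2
  linarith

theorem inner_mixedOpErase_eq_zero_of_isLocalExtrOn {α : Fin N → ℂ} {f g : Fin N → E}
    (hS : ∀ i, ⟪g i, f i⟫ = α i)
    (hext :
      IsLocalExtrOn (fun p : (Fin N → E) × (Fin N → E) => (mixedFP p.1 p.2).re)
        {p | ∀ i, ⟪p.2 i, p.1 i⟫ = α i} (f, g) ∨
      IsLocalExtrOn (fun p : (Fin N → E) × (Fin N → E) => (mixedFP p.1 p.2).im)
        {p | ∀ i, ⟪p.2 i, p.1 i⟫ = α i} (f, g))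
    (m : Fin N) {v w : E} (h₁ : ⟪g m, v⟫ + ⟪w, f m⟫ = 0) (h₂ : ⟪w, v⟫ = 0) :
    ⟪g m, mixedOpErase f g m v⟫ + ⟪w, mixedOpErase f g m (f m)⟫ = 0 := by
  set T := mixedOpErase f g m
  have hI₁ : ⟪g m, Complex.I • v⟫ + ⟪-Complex.I • w, f m⟫ = 0 := by
    simp only [inner_smul_left, inner_smul_right, map_neg, Complex.conj_I, neg_neg]
    linear_combination Complex.I * h₁
  have hI₂ : ⟪-Complex.I • w, Complex.I • v⟫ = 0 := by
    simp only [inner_smul_left, inner_smul_right, h₂, mul_zero]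
  have hrot : ⟪g m, T (Complex.I • v)⟫ + ⟪-Complex.I • w, T (f m)⟫
      = Complex.I * (⟪g m, T v⟫ + ⟪w, T (f m)⟫) := by
    simp only [map_smul, inner_smul_left, inner_smul_right, map_neg, Complex.conj_I, neg_neg]
    ring
  rcases hext with h | h
  · have hre := map_inner_mixedOpErase_eq_zero_of_isLocalExtrOn Complex.reLm hS h m h₁ h₂
    have hIre := map_inner_mixedOpErase_eq_zero_of_isLocalExtrOn Complex.reLm hS h m hI₁ hI₂
    rw [hrot, Complex.reLm_coe, Complex.I_mul_re, neg_eq_zero] at hIre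
    exact Complex.ext hre hIre
  · have him := map_inner_mixedOpErase_eq_zero_of_isLocalExtrOn Complex.imLm hS h m h₁ h₂
    have hIim := map_inner_mixedOpErase_eq_zero_of_isLocalExtrOn Complex.imLm hS h m hI₁ hI₂
    rw [hrot, Complex.imLm_coe, Complex.I_mul_im] at hIim
    exact Complex.ext hIim him

end MixedFramePotential

theorem lagrange_equations_of_local_extr_general {N : ℕ}
    (α : Fin N → ℂ) (f g : Fin N → H) (hS : ∀ m, ⟪g m, f m⟫ = α m)
    (hext :
      IsLocalExtrOn (fun p : (Fin N → H) × (Fin N → H) => (mixedFP p.1 p.2).re)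
        {p : (Fin N → H) × (Fin N → H) | ∀ m, ⟪p.2 m, p.1 m⟫ = α m} (f, g) ∨
      IsLocalExtrOn (fun p : (Fin N → H) × (Fin N → H) => (mixedFP p.1 p.2).im)
        {p : (Fin N → H) × (Fin N → H) | ∀ m, ⟪p.2 m, p.1 m⟫ = α m} (f, g)) :
    ∀ m : Fin N, ∃ c : ℂ,
      ∑ n ∈ Finset.univ.erase m, (⟪g n, f m⟫) • f n = c • f m ∧
      ∑ n ∈ Finset.univ.erase m, (⟪f n, g m⟫) • g n = (starRingEnd ℂ c) • g m := by
  intro m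
  refine exists_eq_smul_and_eq_conj_smul_of_forall_inner (A := mixedOpErase f g m (f m))
    (B := mixedOpErase g f m (g m)) (inner_mixedOpErase_swap f g m (f m) (g m)).symm
    fun v w h₁ h₂ => ?_
  rw [inner_mixedOpErase_swap]
  exact inner_mixedOpErase_eq_zero_of_isLocalExtrOn hS hext m h₁ h₂

/-- if `(f,g) ∈ S̃(α)` is a local extremum on `S̃(α)` of the real part of the
mixed frame potential, or a local extremum on `S̃(α)` of its imaginary part, then for each
`m` there is `c ∈ ℂ` with `∑_{n ≠ m} ⟨f m, g n⟩ f n = c • f m` and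
`∑_{n ≠ m} ⟨g m, f n⟩ g n = conj c • g m` (paper convention for the inner products). -/
theorem lagrange_equations_of_local_extr {N : ℕ} (hd : 1 ≤ Module.finrank ℂ H)
    (α : Fin N → ℂ) (f g : Fin N → H) (hS : ∀ m, ⟪g m, f m⟫ = α m)
    (hext :
      IsLocalExtrOn (fun p : (Fin N → H) × (Fin N → H) => (mixedFP p.1 p.2).re)
        {p : (Fin N → H) × (Fin N → H) | ∀ m, ⟪p.2 m, p.1 m⟫ = α m} (f, g) ∨
      IsLocalExtrOn (fun p : (Fin N → H) × (Fin N → H) => (mixedFP p.1 p.2).im)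
        {p : (Fin N → H) × (Fin N → H) | ∀ m, ⟪p.2 m, p.1 m⟫ = α m} (f, g)) :
    ∀ m : Fin N, ∃ c : ℂ,
      ∑ n ∈ Finset.univ.erase m, (⟪g n, f m⟫) • f n = c • f m ∧
      ∑ n ∈ Finset.univ.erase m, (⟪f n, g m⟫) • g n = (starRingEnd ℂ c) • g m :=
  lagrange_equations_of_local_extr_general α f g hS hext
end

section
/- Let α = (α_1,…,α_N) ∈ ℂ^N and let (f,g) ∈ S̃(α) be a critical pair of sequences. Then for each m ∈ {1,…,N} there exists μ ∈ ℂ such that TU*(f_m) = μ·f_m and UT*(g_m) = conj(μ)·g_m; explicitly, if c ∈ ℂ witnesses the critical-pair equations at index m, then TU*(f_m) = (α_m + c)·f_m and UT*(g_m) = conj(α_m + c)·g_m. -/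
open scoped ComplexInnerProductSpace

/- `H` is a complex inner product space of finite dimension `d = Module.finrank ℂ H`.
The paper's inner product `⟨x, y⟩` is linear in the first argument, hence it corresponds to
Mathlib's `⟪y, x⟫ = inner y x` (Mathlib's inner product is linear in the second argument). -/
variable {H : Type*} [NormedAddCommGroup H] [InnerProductSpace ℂ H] [FiniteDimensional ℂ H]

omit [FiniteDimensional ℂ H] in
theorem mixedOp_apply {N : ℕ} (f g : Fin N → H) (x : H) :
    mixedOp f g x = ∑ n, ⟪g n, x⟫ • f n :=
  rfl

omit [FiniteDimensional ℂ H] in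
theorem mixedOp_apply_self_eq_smul {N : ℕ} {f g : Fin N → H} {m : Fin N} {c : ℂ}
    (h : ∑ n ∈ Finset.univ.erase m, ⟪g n, f m⟫ • f n = c • f m) :
    mixedOp f g (f m) = (⟪g m, f m⟫ + c) • f m := by
  rw [mixedOp_apply, ← Finset.add_sum_erase _ _ (Finset.mem_univ m), h, add_smul]

theorem critical_pair_eigenvectors_general {N : ℕ}
    (α : Fin N → ℂ) (f g : Fin N → H) (hS : ∀ m, ⟪g m, f m⟫ = α m)
    (hcrit : ∀ m : Fin N, ∃ c : ℂ,
      ∑ n ∈ Finset.univ.erase m, (⟪g n, f m⟫) • f n = c • f m ∧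
      ∑ n ∈ Finset.univ.erase m, (⟪f n, g m⟫) • g n = (starRingEnd ℂ c) • g m) :
    ∀ m : Fin N,
      (∃ μ : ℂ, mixedOp f g (f m) = μ • f m ∧
        mixedOp g f (g m) = (starRingEnd ℂ μ) • g m) ∧
      (∀ c : ℂ,
        (∑ n ∈ Finset.univ.erase m, (⟪g n, f m⟫) • f n = c • f m ∧
         ∑ n ∈ Finset.univ.erase m, (⟪f n, g m⟫) • g n = (starRingEnd ℂ c) • g m) →
        mixedOp f g (f m) = (α m + c) • f m ∧
        mixedOp g f (g m) = (starRingEnd ℂ (α m + c)) • g m) := by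
  intro m
  have eigen : ∀ c : ℂ,
      (∑ n ∈ Finset.univ.erase m, (⟪g n, f m⟫) • f n = c • f m ∧
       ∑ n ∈ Finset.univ.erase m, (⟪f n, g m⟫) • g n = (starRingEnd ℂ c) • g m) →
      mixedOp f g (f m) = (α m + c) • f m ∧
      mixedOp g f (g m) = (starRingEnd ℂ (α m + c)) • g m := by
    rintro c ⟨hf, hg⟩
    refine ⟨?_, ?_⟩
    · rw [mixedOp_apply_self_eq_smul hf, hS]
    · rw [mixedOp_apply_self_eq_smul hg, ← inner_conj_symm, hS, map_add]
  obtain ⟨c, hc⟩ := hcrit m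
  exact ⟨⟨α m + c, eigen c hc⟩, eigen⟩

/-- if `(f,g) ∈ S̃(α)` is a critical pair of sequences, then each `f m` is an
eigenvector of `TU⋆` and each `g m` an eigenvector of `UT⋆` with conjugate eigenvalues;
explicitly, if `c` witnesses the critical-pair equations at `m`, the eigenvalues are
`α m + c` and `conj (α m + c)`. -/
theorem critical_pair_eigenvectors {N : ℕ} (hd : 1 ≤ Module.finrank ℂ H)
    (α : Fin N → ℂ) (f g : Fin N → H) (hS : ∀ m, ⟪g m, f m⟫ = α m)
    (hcrit : ∀ m : Fin N, ∃ c : ℂ,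
      ∑ n ∈ Finset.univ.erase m, (⟪g n, f m⟫) • f n = c • f m ∧
      ∑ n ∈ Finset.univ.erase m, (⟪f n, g m⟫) • g n = (starRingEnd ℂ c) • g m) :
    ∀ m : Fin N,
      (∃ μ : ℂ, mixedOp f g (f m) = μ • f m ∧
        mixedOp g f (g m) = (starRingEnd ℂ μ) • g m) ∧
      (∀ c : ℂ,
        (∑ n ∈ Finset.univ.erase m, (⟪g n, f m⟫) • f n = c • f m ∧
         ∑ n ∈ Finset.univ.erase m, (⟪f n, g m⟫) • g n = (starRingEnd ℂ c) • g m) →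
        mixedOp f g (f m) = (α m + c) • f m ∧
        mixedOp g f (g m) = (starRingEnd ℂ (α m + c)) • g m) :=
  critical_pair_eigenvectors_general α f g hS hcrit
end

section
/- Let α = (α_1,…,α_N) ∈ ℂ^N with N > d. Then there exists a pair (f,g) ∈ S̃(α) which is a pair of dual frames (i.e. ∑_{m=1}^N ⟨x, g_m⟩ f_m = x for all x ∈ H) if and only if ∑_{m=1}^N α_m = d. -/
/-!
Necessity: the identity `x = ∑ ⟪g m, x⟫ f m` is a sum of rank-one operators, and taking traces
gives `d = ∑ ⟪g m, f m⟫`.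

Sufficiency: pad an orthonormal basis `e` to a dual pair `(a, b)` on `N - 1` indices (with extra
`a k = e 0` and `b k = 0`), so that `u = ∑ e i` has `⟪u, a k⟫ = 1` for all `k`. For any weights
`c`, the pair with `f = (∑ c k a k, a)` and `g = (u, b - c̄ u)` is again dual, since the rank-one
term added at the new index cancels what is subtracted from the old ones; its `k`-th inner product
is `⟪b k, a k⟫ - c k`, which can be made equal to any prescribed value, and the trace identity then
forces the remaining one to be right.
-/

open scoped ComplexInnerProductSpace

/- `H` is a complex inner product space of finite dimension `d = Module.finrank ℂ H`.
The paper's inner product `⟨x, y⟩` is linear in the first argument, hence it corresponds to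
Mathlib's `⟪y, x⟫ = inner y x` (Mathlib's inner product is linear in the second argument). -/
variable {H : Type*} [NormedAddCommGroup H] [InnerProductSpace ℂ H] [FiniteDimensional ℂ H]

section DualFramePair

variable {𝕜 E ι : Type*} [RCLike 𝕜] [NormedAddCommGroup E] [InnerProductSpace 𝕜 E] [Fintype ι]

variable (𝕜) in
def IsDualFramePair (f g : ι → E) : Prop :=
  ∀ x, ∑ m, inner 𝕜 (g m) x • f m = x

theorem IsDualFramePair.sum_inner_eq_finrank [FiniteDimensional 𝕜 E] {f g : ι → E}
    (h : IsDualFramePair 𝕜 f g) : ∑ m, inner 𝕜 (g m) (f m) = Module.finrank 𝕜 E := by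
  have hid : ∑ m, (innerₛₗ 𝕜 (g m)).smulRight (f m) = LinearMap.id := by
    ext x
    simpa using h x
  simpa using congr(LinearMap.trace 𝕜 E $hid)

theorem IsDualFramePair.cons {n : ℕ} {a b : Fin n → E} (h : IsDualFramePair 𝕜 a b)
    (u : E) (c : Fin n → 𝕜) :
    IsDualFramePair 𝕜 (Fin.cons (∑ k, c k • a k) a : Fin (n + 1) → E)
      (Fin.cons u fun k ↦ b k - starRingEnd 𝕜 (c k) • u) := by
  intro x
  simp [Fin.sum_univ_succ, inner_sub_left, inner_smul_left, sub_smul, Finset.sum_sub_distrib,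
    Finset.smul_sum, smul_smul, mul_comm, h x]

end DualFramePair

section Existence

variable {𝕜 E : Type*} [RCLike 𝕜] [NormedAddCommGroup E] [InnerProductSpace 𝕜 E]
  [FiniteDimensional 𝕜 E]

theorem exists_isDualFramePair_forall_inner_ne_zero {n : ℕ} (hd : 0 < Module.finrank 𝕜 E)
    (hn : Module.finrank 𝕜 E ≤ n) :
    ∃ (a b : Fin n → E) (u : E), IsDualFramePair 𝕜 a b ∧ ∀ k, inner 𝕜 u (a k) ≠ 0 := by
  obtain ⟨r, rfl⟩ := Nat.exists_eq_add_of_le hn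
  set e := stdOrthonormalBasis 𝕜 E
  have hu : ∀ i, inner 𝕜 (∑ j, e j) (e i) = 1 := by
    simp [sum_inner, orthonormal_iff_ite.mp e.orthonormal]
  refine ⟨Fin.append e fun _ ↦ e ⟨0, hd⟩, Fin.append e 0, ∑ j, e j, fun x ↦ ?_, fun k ↦ ?_⟩
  · simpa [Fin.sum_univ_add] using e.sum_repr' x
  · refine Fin.addCases (fun i ↦ ?_) (fun i ↦ ?_) k <;> simp [hu]

theorem exists_isDualFramePair_inner_eq {N : ℕ} (hd : 0 < Module.finrank 𝕜 E)
    (hN : Module.finrank 𝕜 E < N) (α : Fin N → 𝕜) (hα : ∑ m, α m = Module.finrank 𝕜 E) :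
    ∃ f g : Fin N → E, (∀ m, inner 𝕜 (g m) (f m) = α m) ∧ IsDualFramePair 𝕜 f g := by
  obtain ⟨n, rfl⟩ : ∃ n, N = n + 1 := Nat.exists_eq_add_one.mpr (by omega)
  obtain ⟨a, b, u, hab, hu⟩ := exists_isDualFramePair_forall_inner_ne_zero hd (by omega : _ ≤ n)
  set c : Fin n → 𝕜 := fun k ↦ (inner 𝕜 (b k) (a k) - α k.succ) / inner 𝕜 u (a k)
  have hc : ∀ k, c k * inner 𝕜 u (a k) = inner 𝕜 (b k) (a k) - α k.succ :=
    fun k ↦ div_mul_cancel₀ _ (hu k)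
  refine ⟨_, _, fun m ↦ ?_, hab.cons u c⟩
  refine Fin.cases ?_ (fun k ↦ ?_) m
  · rw [Fin.sum_univ_succ] at hα
    calc inner 𝕜 u (∑ k, c k • a k) = ∑ k, c k * inner 𝕜 u (a k) := by
          simp [inner_sum, inner_smul_right]
      _ = ∑ k, (inner 𝕜 (b k) (a k) - α k.succ) := Finset.sum_congr rfl fun k _ ↦ hc k
      _ = α 0 := by
          rw [Finset.sum_sub_distrib, hab.sum_inner_eq_finrank]
          linear_combination -hα
  · simp [inner_sub_left, inner_smul_left, hc]

end Existence

/-- for `N > d`, there exists a pair of dual frames `(f,g) ∈ S̃(α)`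
(i.e. with `⟨f m, g m⟩ = α m` for all `m` and `∑ m, ⟨x, g m⟩ f m = x` for all `x ∈ H`)
iff `∑ m, α m = d`. -/
theorem dual_frames_iff_sum_alpha {N : ℕ} (hd : 1 ≤ Module.finrank ℂ H)
    (hNd : Module.finrank ℂ H < N) (α : Fin N → ℂ) :
    (∃ f g : Fin N → H, (∀ m, ⟪g m, f m⟫ = α m) ∧
      ∀ x : H, ∑ m, (⟪g m, x⟫) • f m = x) ↔
    ∑ m, α m = (Module.finrank ℂ H : ℂ) := by
  constructor
  · rintro ⟨f, g, hfg, hdual⟩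
    simpa only [hfg] using IsDualFramePair.sum_inner_eq_finrank (𝕜 := ℂ) hdual
  · exact exists_isDualFramePair_inner_eq hd hNd α
end
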